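/- arXiv:2501.09908 — 3 statements merged into one kernel-verified Lean document; each statement's English description precedes it below -/
import Mathlib

section
/- Let α₁, α₂, α₃, α₄, t₁, t₂ be real numbers. Then the adjacent-angle kinematic equation cos α₃·(1+t₁²)(1+t₂²) = cos(α₂−α₁−α₄)·t₂² + cos(α₂+α₁−α₄)·t₁² + cos(α₂−α₁+α₄)·t₁²t₂² + cos(α₂+α₁+α₄) + 4·sin α₂·sin α₄·t₁t₂ holds for the sector angles (α₁,α₂,α₃,α₄) with folding-angle parameters (t₁,t₂) if and only if the same equation holds for the dual sector angles (π−α₁, π−α₂, π−α₃, π−α₄) with parameters (t₁, −t₂). -/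
open Real

/-- The adjacent-angle kinematic equation (instance i = 1) holds for sector angles
(α₁,α₂,α₃,α₄) with parameters (t₁,t₂) iff it holds for the dual sector angles
(π−α₁, π−α₂, π−α₃, π−α₄) with parameters (t₁, −t₂). -/
theorem adj_eq_dual_invariant (α₁ α₂ α₃ α₄ t₁ t₂ : ℝ) :
    (Real.cos α₃ * (1 + t₁ ^ 2) * (1 + t₂ ^ 2)
      = Real.cos (α₂ - α₁ - α₄) * t₂ ^ 2 + Real.cos (α₂ + α₁ - α₄) * t₁ ^ 2
        + Real.cos (α₂ - α₁ + α₄) * t₁ ^ 2 * t₂ ^ 2 + Real.cos (α₂ + α₁ + α₄)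
        + 4 * Real.sin α₂ * Real.sin α₄ * t₁ * t₂) ↔
    (Real.cos (π - α₃) * (1 + t₁ ^ 2) * (1 + (-t₂) ^ 2)
      = Real.cos ((π - α₂) - (π - α₁) - (π - α₄)) * (-t₂) ^ 2
        + Real.cos ((π - α₂) + (π - α₁) - (π - α₄)) * t₁ ^ 2
        + Real.cos ((π - α₂) - (π - α₁) + (π - α₄)) * t₁ ^ 2 * (-t₂) ^ 2
        + Real.cos ((π - α₂) + (π - α₁) + (π - α₄))
        + 4 * Real.sin (π - α₂) * Real.sin (π - α₄) * t₁ * (-t₂)) := by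
  have h1 : Real.cos ((π - α₂) - (π - α₁) - (π - α₄)) = -Real.cos (α₂ - α₁ - α₄) := by
    rw [show (π - α₂) - (π - α₁) - (π - α₄) = -((α₂ - α₁ - α₄) + π) by ring, Real.cos_neg, Real.cos_add_pi]
  have h2 : Real.cos ((π - α₂) + (π - α₁) - (π - α₄)) = -Real.cos (α₂ + α₁ - α₄) := by
    rw [show (π - α₂) + (π - α₁) - (π - α₄) = π - (α₂ + α₁ - α₄) by ring, Real.cos_pi_sub]
  have h3 : Real.cos ((π - α₂) - (π - α₁) + (π - α₄)) = -Real.cos (α₂ - α₁ + α₄) := by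
    rw [show (π - α₂) - (π - α₁) + (π - α₄) = π - (α₂ - α₁ + α₄) by ring, Real.cos_pi_sub]
  have h4 : Real.cos ((π - α₂) + (π - α₁) + (π - α₄)) = -Real.cos (α₂ + α₁ + α₄) := by
    rw [show (π - α₂) + (π - α₁) + (π - α₄) = (π - (α₂ + α₁ + α₄)) + 2 * π by ring,
      Real.cos_add_two_pi, Real.cos_pi_sub]
  rw [h1, h2, h3, h4, Real.cos_pi_sub, Real.sin_pi_sub, Real.sin_pi_sub]
  constructor <;> intro h <;> nlinarith [h]
end

section
/- Let C = (α₁,α₂,α₃,α₄) be a degree-4 rigid origami vertex and C* = (π−α₁,π−α₂,π−α₃,π−α₄) its dual. Define the configuration space S(C) ⊆ (−π,π)⁴ as the set of folding-angle vectors (ρ₁,ρ₂,ρ₃,ρ₄) such that, with tᵢ = tan(ρᵢ/2), both the opposite-angle kinematic equation and the adjacent-angle kinematic equation hold for every index i = 1,2,3,4 (indices mod 4). Then (ρ₁,ρ₂,ρ₃,ρ₄) ∈ S(C) if and only if (ρ₁,−ρ₂,ρ₃,−ρ₄) ∈ S(C*); that is, the configuration spaces of C and C* are identical up to a change of sign in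 the coordinates. -/
open Real

/-- The denominator-cleared opposite-angle kinematic equation (Foschi–Hull–Kawasaki)
for cyclic index `i` (0-based; `α i` is the sector angle `α_{i+1}` of the paper). -/
def OppEq (α t : Fin 4 → ℝ) (i : Fin 4) : Prop :=
  (t i) ^ 2 * ((1 + (t (i + 2)) ^ 2) * Real.cos (α (i - 1) - α i)
      - (t (i + 2)) ^ 2 * Real.cos (α (i + 1) - α (i + 2))
      - Real.cos (α (i + 1) + α (i + 2)))
    = -(1 + (t (i + 2)) ^ 2) * Real.cos (α (i - 1) + α i)
      + (t (i + 2)) ^ 2 * Real.cos (α (i + 1) - α (i + 2))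
      + Real.cos (α (i + 1) + α (i + 2))

/-- The adjacent-angle kinematic equation (Foschi–Hull–Kawasaki) for cyclic index `i`. -/
def AdjEq (α t : Fin 4 → ℝ) (i : Fin 4) : Prop :=
  Real.cos (α (i + 2)) * (1 + (t i) ^ 2) * (1 + (t (i + 1)) ^ 2)
    = Real.cos (α (i + 1) - α i - α (i - 1)) * (t (i + 1)) ^ 2
      + Real.cos (α (i + 1) + α i - α (i - 1)) * (t i) ^ 2
      + Real.cos (α (i + 1) - α i + α (i - 1)) * (t i) ^ 2 * (t (i + 1)) ^ 2
      + Real.cos (α (i + 1) + α i + α (i - 1))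
      + 4 * Real.sin (α (i + 1)) * Real.sin (α (i - 1)) * t i * t (i + 1)

/-- Membership of a folding-angle vector `ρ ∈ (−π,π)⁴` in the configuration space of the
degree-4 vertex with sector angles `α`: with `tᵢ = tan(ρᵢ/2)`, both kinematic equations
hold for every cyclic index. -/
def InConfigSpace (α ρ : Fin 4 → ℝ) : Prop :=
  (∀ i, ρ i ∈ Set.Ioo (-π) π) ∧
  (∀ i, OppEq α (fun j => Real.tan (ρ j / 2)) i) ∧
  (∀ i, AdjEq α (fun j => Real.tan (ρ j / 2)) i)

section DualityHelpers
variable (a b c : ℝ)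

lemma fmk0 (h : 0 < 4) : (⟨0, h⟩ : Fin 4) = 0 := rfl
lemma fmk1 (h : 1 < 4) : (⟨1, h⟩ : Fin 4) = 1 := rfl
lemma fmk2 (h : 2 < 4) : (⟨2, h⟩ : Fin 4) = 2 := rfl
lemma fmk3 (h : 3 < 4) : (⟨3, h⟩ : Fin 4) = 3 := rfl

lemma cds : Real.cos (π - a - (π - b)) = Real.cos (a - b) := by
  rw [show π - a - (π - b) = -(a - b) by ring, Real.cos_neg]

lemma cps : Real.cos (π - a + (π - b)) = Real.cos (a + b) := by
  rw [show π - a + (π - b) = 2 * π - (a + b) by ring, Real.cos_sub]; simp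

lemma c3a : Real.cos (π - a - (π - b) - (π - c)) = -Real.cos (a - b - c) := by
  rw [show π - a - (π - b) - (π - c) = -(π + (a - b - c)) by ring, Real.cos_neg,
    Real.cos_add]; simp

lemma c3b : Real.cos (π - a + (π - b) - (π - c)) = -Real.cos (a + b - c) := by
  rw [show π - a + (π - b) - (π - c) = π - (a + b - c) by ring, Real.cos_pi_sub]

lemma c3c : Real.cos (π - a - (π - b) + (π - c)) = -Real.cos (a - b + c) := by
  rw [show π - a - (π - b) + (π - c) = π - (a - b + c) by ring, Real.cos_pi_sub]

lemma c3d : Real.cos (π - a + (π - b) + (π - c)) = -Real.cos (a + b + c) := by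
  rw [show π - a + (π - b) + (π - c) = 2 * π + (π - (a + b + c)) by ring, Real.cos_add]
  simp [Real.cos_pi_sub]

end DualityHelpers

/-- Elliptic-hyperbolic duality: `(ρ₁,ρ₂,ρ₃,ρ₄)` lies in the configuration space of
`C = (α₁,α₂,α₃,α₄)` iff `(ρ₁,−ρ₂,ρ₃,−ρ₄)` lies in the configuration space of the dual
vertex `C* = (π−α₁,π−α₂,π−α₃,π−α₄)`. -/
theorem config_space_duality (α₁ α₂ α₃ α₄ ρ₁ ρ₂ ρ₃ ρ₄ : ℝ) :
    InConfigSpace ![α₁, α₂, α₃, α₄] ![ρ₁, ρ₂, ρ₃, ρ₄] ↔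
    InConfigSpace ![π - α₁, π - α₂, π - α₃, π - α₄] ![ρ₁, -ρ₂, ρ₃, -ρ₄] := by
  constructor
  · rintro ⟨h1, h2, h3⟩
    refine ⟨fun i => ?_, fun i => ?_, fun i => ?_⟩
    · have h := h1 i
      fin_cases i <;>
        simp only [fmk0, fmk1, fmk2, fmk3, Matrix.cons_val_zero, Matrix.cons_val_one, Matrix.head_cons,
          Matrix.cons_val_two, Matrix.tail_cons, Matrix.cons_val_three, Matrix.cons_val_fin_one,
          Matrix.cons_val_succ, Set.mem_Ioo] at h ⊢ <;>
        exact ⟨by linarith [h.1, h.2], by linarith [h.1, h.2]⟩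
    · have h := h2 i
      fin_cases i <;>
      · simp only [OppEq, fmk0, fmk1, fmk2, fmk3, show (0:Fin 4) - 1 = 3 by decide, show (1:Fin 4) - 1 = 0 by decide,
          show (2:Fin 4) - 1 = 1 by decide, show (3:Fin 4) - 1 = 2 by decide,
          show (0:Fin 4) + 1 = 1 by decide, show (1:Fin 4) + 1 = 2 by decide,
          show (2:Fin 4) + 1 = 3 by decide, show (3:Fin 4) + 1 = 0 by decide,
          show (0:Fin 4) + 2 = 2 by decide, show (1:Fin 4) + 2 = 3 by decide,
          show (2:Fin 4) + 2 = 0 by decide, show (3:Fin 4) + 2 = 1 by decide,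
          Matrix.cons_val_zero, Matrix.cons_val_one, Matrix.head_cons,
          Matrix.cons_val_two, Matrix.tail_cons, Matrix.cons_val_three, Matrix.cons_val_fin_one,
          Matrix.cons_val_succ] at h ⊢
        simp only [cds, cps, neg_div, Real.tan_neg, neg_sq]
        linear_combination h
    · have h := h3 i
      fin_cases i <;>
      · simp only [AdjEq, fmk0, fmk1, fmk2, fmk3, show (0:Fin 4) - 1 = 3 by decide, show (1:Fin 4) - 1 = 0 by decide,
          show (2:Fin 4) - 1 = 1 by decide, show (3:Fin 4) - 1 = 2 by decide,
          show (0:Fin 4) + 1 = 1 by decide, show (1:Fin 4) + 1 = 2 by decide,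
          show (2:Fin 4) + 1 = 3 by decide, show (3:Fin 4) + 1 = 0 by decide,
          show (0:Fin 4) + 2 = 2 by decide, show (1:Fin 4) + 2 = 3 by decide,
          show (2:Fin 4) + 2 = 0 by decide, show (3:Fin 4) + 2 = 1 by decide,
          Matrix.cons_val_zero, Matrix.cons_val_one, Matrix.head_cons,
          Matrix.cons_val_two, Matrix.tail_cons, Matrix.cons_val_three, Matrix.cons_val_fin_one,
          Matrix.cons_val_succ] at h ⊢
        simp only [c3a, c3b, c3c, c3d, Real.cos_pi_sub, Real.sin_pi_sub, neg_div,
          Real.tan_neg, neg_sq]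
        linear_combination -h
  · rintro ⟨h1, h2, h3⟩
    refine ⟨fun i => ?_, fun i => ?_, fun i => ?_⟩
    · have h := h1 i
      fin_cases i <;>
        simp only [fmk0, fmk1, fmk2, fmk3, Matrix.cons_val_zero, Matrix.cons_val_one, Matrix.head_cons,
          Matrix.cons_val_two, Matrix.tail_cons, Matrix.cons_val_three, Matrix.cons_val_fin_one,
          Matrix.cons_val_succ, Set.mem_Ioo] at h ⊢ <;>
        exact ⟨by linarith [h.1, h.2], by linarith [h.1, h.2]⟩
    · have h := h2 i
      fin_cases i <;>
      · simp only [OppEq, fmk0, fmk1, fmk2, fmk3, show (0:Fin 4) - 1 = 3 by decide, show (1:Fin 4) - 1 = 0 by decide,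
          show (2:Fin 4) - 1 = 1 by decide, show (3:Fin 4) - 1 = 2 by decide,
          show (0:Fin 4) + 1 = 1 by decide, show (1:Fin 4) + 1 = 2 by decide,
          show (2:Fin 4) + 1 = 3 by decide, show (3:Fin 4) + 1 = 0 by decide,
          show (0:Fin 4) + 2 = 2 by decide, show (1:Fin 4) + 2 = 3 by decide,
          show (2:Fin 4) + 2 = 0 by decide, show (3:Fin 4) + 2 = 1 by decide,
          Matrix.cons_val_zero, Matrix.cons_val_one, Matrix.head_cons,
          Matrix.cons_val_two, Matrix.tail_cons, Matrix.cons_val_three, Matrix.cons_val_fin_one,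
          Matrix.cons_val_succ] at h ⊢
        simp only [cds, cps, neg_div, Real.tan_neg, neg_sq] at h
        linear_combination h
    · have h := h3 i
      fin_cases i <;>
      · simp only [AdjEq, fmk0, fmk1, fmk2, fmk3, show (0:Fin 4) - 1 = 3 by decide, show (1:Fin 4) - 1 = 0 by decide,
          show (2:Fin 4) - 1 = 1 by decide, show (3:Fin 4) - 1 = 2 by decide,
          show (0:Fin 4) + 1 = 1 by decide, show (1:Fin 4) + 1 = 2 by decide,
          show (2:Fin 4) + 1 = 3 by decide, show (3:Fin 4) + 1 = 0 by decide,
          show (0:Fin 4) + 2 = 2 by decide, show (1:Fin 4) + 2 = 3 by decide,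
          show (2:Fin 4) + 2 = 0 by decide, show (3:Fin 4) + 2 = 1 by decide,
          Matrix.cons_val_zero, Matrix.cons_val_one, Matrix.head_cons,
          Matrix.cons_val_two, Matrix.tail_cons, Matrix.cons_val_three, Matrix.cons_val_fin_one,
          Matrix.cons_val_succ] at h ⊢
        simp only [c3a, c3b, c3c, c3d, Real.cos_pi_sub, Real.sin_pi_sub, neg_div,
          Real.tan_neg, neg_sq] at h
        linear_combination -h
end

section
/- Let α, β, t₁, t₂ be real numbers with 0 < α < π, 0 < β < π, and α + β ≠ π, and consider the Euclidean flat-foldable vertex C = (α, β, π−α, π−β). Set k₁ = cos((α+β)/2)/cos((α−β)/2) and k₂ = sin((α−β)/2)/sin((α+β)/2). Then the adjacent-angle kinematic equation for index i = 1 (with α₁ = α, α₂ = β, α₃ = π−α, α₄ = π−β) holds if and only if t₂ = −k₁·t₁ (mode 1) or t₁ = k₂·t₂ (mode 2). -/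
open Real

/-- For the Euclidean flat-foldable vertex `C = (α, β, π−α, π−β)` with
`0 < α < π`, `0 < β < π`, `α + β ≠ π`, and
`k₁ = cos((α+β)/2)/cos((α−β)/2)`, `k₂ = sin((α−β)/2)/sin((α+β)/2)`,
the adjacent-angle kinematic equation for index `i = 1` holds iff
`t₂ = −k₁·t₁` (mode 1) or `t₁ = k₂·t₂` (mode 2). -/
theorem adj_eq_flat_foldable_modes (α β t₁ t₂ : ℝ)
    (hα₀ : 0 < α) (hαπ : α < π) (hβ₀ : 0 < β) (hβπ : β < π) (hsum : α + β ≠ π)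
    (k₁ k₂ : ℝ)
    (hk₁ : k₁ = Real.cos ((α + β) / 2) / Real.cos ((α - β) / 2))
    (hk₂ : k₂ = Real.sin ((α - β) / 2) / Real.sin ((α + β) / 2)) :
    (Real.cos (π - α) * (1 + t₁ ^ 2) * (1 + t₂ ^ 2)
      = Real.cos (β - α - (π - β)) * t₂ ^ 2
        + Real.cos (β + α - (π - β)) * t₁ ^ 2
        + Real.cos (β - α + (π - β)) * t₁ ^ 2 * t₂ ^ 2
        + Real.cos (β + α + (π - β))
        + 4 * Real.sin β * Real.sin (π - β) * t₁ * t₂) ↔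
    (t₂ = -k₁ * t₁ ∨ t₁ = k₂ * t₂) := by
  have hπ := Real.pi_pos
  set a := (α + β) / 2 with ha
  set b := (α - β) / 2 with hb
  have ha0 : 0 < a := by rw [ha]; linarith
  have haπ : a < π := by rw [ha]; linarith
  have hca : Real.cos a ≠ 0 := by
    intro h
    rcases Real.cos_eq_zero_iff.mp h with ⟨n, hn⟩
    have hn0 : n = 0 := by
      rcases lt_trichotomy n 0 with h' | h' | h'
      · have hle : (n : ℝ) ≤ -1 := by exact_mod_cast Int.le_sub_one_of_lt h'
        rw [hn] at ha0; nlinarith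
      · exact h'
      · have hle : (1 : ℝ) ≤ (n : ℝ) := by exact_mod_cast h'
        rw [hn] at haπ; nlinarith
    rw [hn0] at hn
    apply hsum
    rw [ha] at hn
    push_cast at hn
    linarith
  have hsa : 0 < Real.sin a := Real.sin_pos_of_pos_of_lt_pi ha0 haπ
  have hcb : 0 < Real.cos b := by
    apply Real.cos_pos_of_mem_Ioo
    constructor
    · rw [hb]; linarith
    · rw [hb]; linarith
  have hsβ : 0 < Real.sin β := Real.sin_pos_of_pos_of_lt_pi hβ₀ hβπ
  have hαab : α = a + b := by rw [ha, hb]; ring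
  have hβab : β = a - b := by rw [ha, hb]; ring
  -- trig rewrites into half angles
  have h1 : Real.cos (π - α) = -(cos a * cos b - sin a * sin b) := by
    rw [Real.cos_pi_sub, hαab, Real.cos_add]
  have e2 : β - α - (π - β) = (a - (b + (b + b))) - π := by rw [hαab, hβab]; ring
  have h2 : Real.cos (β - α - (π - β))
      = -(cos a * (cos b * (cos b * cos b - sin b * sin b) - sin b * (sin b * cos b + cos b * sin b))
          + sin a * (sin b * (cos b * cos b - sin b * sin b) + cos b * (sin b * cos b + cos b * sin b))) := by
    rw [e2, Real.cos_sub_pi, Real.cos_sub, Real.sin_add, Real.cos_add, Real.sin_add, Real.cos_add]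
  have e3 : β + α - (π - β) = ((a + (a + a)) - b) - π := by rw [hαab, hβab]; ring
  have h3 : Real.cos (β + α - (π - β))
      = -((cos a * (cos a * cos a - sin a * sin a) - sin a * (sin a * cos a + cos a * sin a)) * cos b
          + (sin a * (cos a * cos a - sin a * sin a) + cos a * (sin a * cos a + cos a * sin a)) * sin b) := by
    rw [e3, Real.cos_sub_pi, Real.cos_sub, Real.sin_add, Real.cos_add, Real.sin_add, Real.cos_add]
  have e4 : β - α + (π - β) = π - (a + b) := by rw [hαab, hβab]; ring
  have h4 : Real.cos (β - α + (π - β)) = -(cos a * cos b - sin a * sin b) := by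
    rw [e4, Real.cos_pi_sub, Real.cos_add]
  have e5 : β + α + (π - β) = (a + b) + π := by rw [hαab, hβab]; ring
  have h5 : Real.cos (β + α + (π - β)) = -(cos a * cos b - sin a * sin b) := by
    rw [e5, Real.cos_add_pi, Real.cos_add]
  have h6 : Real.sin (π - β) = sin a * cos b - cos a * sin b := by
    rw [Real.sin_pi_sub, hβab, Real.sin_sub]
  have h7 : Real.sin β = sin a * cos b - cos a * sin b := by
    rw [hβab, Real.sin_sub]
  -- the key polynomial factorization identity
  have hident :
      (Real.cos (β - α - (π - β)) * t₂ ^ 2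
        + Real.cos (β + α - (π - β)) * t₁ ^ 2
        + Real.cos (β - α + (π - β)) * t₁ ^ 2 * t₂ ^ 2
        + Real.cos (β + α + (π - β))
        + 4 * Real.sin β * Real.sin (π - β) * t₁ * t₂)
        - Real.cos (π - α) * (1 + t₁ ^ 2) * (1 + t₂ ^ 2)
      = 4 * Real.sin β * ((sin a * t₁ - sin b * t₂) * (cos a * t₁ + cos b * t₂)) := by
    rw [h1, h2, h3, h4, h5, h6, h7]
    linear_combination ((Real.sin a * Real.sin b - Real.cos a * Real.cos b) * t₁ ^ 2) *
        (Real.sin_sq_add_cos_sq a) +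
      ((Real.sin a * Real.sin b - Real.cos a * Real.cos b) * t₂ ^ 2) *
        (Real.sin_sq_add_cos_sq b)
  -- mode translations
  have hm1 : cos a * t₁ + cos b * t₂ = 0 ↔ t₂ = -k₁ * t₁ := by
    have hrw : -k₁ * t₁ = (-(cos a) * t₁) / cos b := by rw [hk₁]; ring
    rw [hrw, eq_div_iff (ne_of_gt hcb)]
    constructor
    · intro h; linarith
    · intro h; linarith
  have hm2 : sin a * t₁ - sin b * t₂ = 0 ↔ t₁ = k₂ * t₂ := by
    have hrw : k₂ * t₂ = (sin b * t₂) / sin a := by rw [hk₂]; ring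
    rw [hrw, eq_div_iff (ne_of_gt hsa)]
    constructor
    · intro h; linarith
    · intro h; linarith
  constructor
  · intro hE
    have h0 : (sin a * t₁ - sin b * t₂) * (cos a * t₁ + cos b * t₂) = 0 := by
      have hz : 4 * Real.sin β * ((sin a * t₁ - sin b * t₂) * (cos a * t₁ + cos b * t₂)) = 0 := by
        rw [← hident, ← hE]; ring
      have h4s : (4 : ℝ) * Real.sin β ≠ 0 := by positivity
      exact (mul_eq_zero.mp hz).resolve_left h4s
    rcases mul_eq_zero.mp h0 with h' | h'
    · exact Or.inr (hm2.mp h')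
    · exact Or.inl (hm1.mp h')
  · intro hmode
    have h0 : (sin a * t₁ - sin b * t₂) * (cos a * t₁ + cos b * t₂) = 0 := by
      rcases hmode with h' | h'
      · exact mul_eq_zero_of_right _ (hm1.mpr h')
      · exact mul_eq_zero_of_left (hm2.mpr h') _
    have hz := hident
    rw [h0] at hz
    linarith [sub_eq_zero.mp (by linarith [hz] : (Real.cos (β - α - (π - β)) * t₂ ^ 2
        + Real.cos (β + α - (π - β)) * t₁ ^ 2
        + Real.cos (β - α + (π - β)) * t₁ ^ 2 * t₂ ^ 2
        + Real.cos (β + α + (π - β))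
        + 4 * Real.sin β * Real.sin (π - β) * t₁ * t₂)
        - Real.cos (π - α) * (1 + t₁ ^ 2) * (1 + t₂ ^ 2) = 0)]
end
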